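/- arXiv:math/0404454 — 6 statements merged into one kernel-verified Lean document; each statement's English description precedes it below -/
import Mathlib

section
/- Let R be a commutative ring, let A and B be commutative R-algebras, let a ∈ A and b ∈ B, and let P, Q ∈ R[X] be monic polynomials with P(a) = 0 in A and Q(b) = 0 in B. Then the R-subalgebra R[(a,b)] of A × B generated by the single element (a,b) satisfies: (i) R[(a,b)] ⊆ R[a] × R[b]; and (ii) for every x ∈ R[a] and every y ∈ R[b], the element (Q(a)·x, P(b)·y) belongs to R[(a,b)]. In particular Q(a)·R[a] × P(b)·R[b] ⊆ R[(a,b)] ⊆ R[a] × R[b]. -/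
open Polynomial

/-- Lattice containment from §1.2: `Q(a)·R[a] × P(b)·R[b] ⊆ R[(a,b)] ⊆ R[a] × R[b]`. -/
theorem stmt_0 (R A B : Type*) [CommRing R] [CommRing A] [CommRing B]
    [Algebra R A] [Algebra R B] (a : A) (b : B) (P Q : R[X])
    (hP : P.Monic) (hQ : Q.Monic) (hPa : aeval a P = 0) (hQb : aeval b Q = 0) :
    Algebra.adjoin R {((a, b) : A × B)} ≤
        (Algebra.adjoin R {a}).prod (Algebra.adjoin R {b}) ∧
      ∀ x ∈ Algebra.adjoin R {a}, ∀ y ∈ Algebra.adjoin R {b},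
        ((aeval a Q * x, aeval b P * y) : A × B) ∈
          Algebra.adjoin R {((a, b) : A × B)} := by
  have key : ∀ h : R[X], aeval ((a, b) : A × B) h = (aeval a h, aeval b h) := by
    intro h
    ext
    · exact (aeval_algHom_apply (AlgHom.fst R A B) (a, b) h).symm
    · exact (aeval_algHom_apply (AlgHom.snd R A B) (a, b) h).symm
  constructor
  · apply Algebra.adjoin_le
    rintro _ rfl
    exact ⟨Algebra.subset_adjoin rfl, Algebra.subset_adjoin rfl⟩
  · intro x hx y hy
    rw [Algebra.adjoin_singleton_eq_range_aeval] at hx hy ⊢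
    obtain ⟨f, rfl⟩ := hx
    obtain ⟨g, rfl⟩ := hy
    refine ⟨Q * f + P * g, ?_⟩
    show aeval ((a, b) : A × B) (Q * f + P * g) = _
    rw [key]
    simp [hPa, hQb]
end

section
/- Let R be a commutative ring, σ : R → R a ring automorphism with σ ∘ σ = id, n ≥ 0, and let Φ and θ be n×n matrices over R such that Φ is invertible (its determinant is a unit) and Φ·θ = −(σ(θ))ᵀ·Φ, where σ(θ) denotes the matrix θ with σ applied to each entry. Then the characteristic polynomial χ_θ(X) = det(X·1 − θ) satisfies σ(coeff_k(χ_θ)) = (−1)^{n−k}·coeff_k(χ_θ) for every 0 ≤ k ≤ n; equivalently, writing χ_θ = X^n + a_1 X^{n−1} + ⋯ + a_n, one has σ(a_i) = (−1)^i·a_i for all 1 ≤ i ≤ n. -/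
open Matrix Polynomial

private lemma charpoly_transpose' {R : Type*} [CommRing R] {n : ℕ}
    (M : Matrix (Fin n) (Fin n) R) : Mᵀ.charpoly = M.charpoly := by
  unfold Matrix.charpoly
  rw [show charmatrix Mᵀ = (charmatrix M)ᵀ from Matrix.ext fun i j => by
    by_cases h : i = j
    · subst h; simp
    · rw [Matrix.transpose_apply, charmatrix_apply_ne _ _ _ h,
        charmatrix_apply_ne _ _ _ (Ne.symm h), Matrix.transpose_apply]]
  exact det_transpose _

private lemma charpoly_conj' {R : Type*} [CommRing R] {n : ℕ}
    (Φ N : Matrix (Fin n) (Fin n) R) (hΦ : IsUnit Φ.det) :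
    (Φ * N * Φ⁻¹).charpoly = N.charpoly := by
  unfold Matrix.charpoly
  have h1 : Φ.map (C : R →+* R[X]) * Φ⁻¹.map C = 1 := by
    rw [← Matrix.map_mul, Matrix.mul_nonsing_inv _ hΦ]
    simp
  have hs : (Matrix.scalar (Fin n)) (X : R[X]) = (X : R[X]) • (1 : Matrix (Fin n) (Fin n) R[X]) := by
    rw [Matrix.scalar_apply, smul_eq_diagonal_mul, Matrix.mul_one]
  have h2 : charmatrix (Φ * N * Φ⁻¹) =
      Φ.map (C : R →+* R[X]) * charmatrix N * Φ⁻¹.map C := by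
    unfold charmatrix
    rw [Matrix.mul_sub, Matrix.sub_mul]
    congr 1
    · rw [hs, Matrix.mul_smul, Matrix.smul_mul, mul_one, h1]
    · simp only [RingHom.mapMatrix_apply]
      rw [Matrix.map_mul, Matrix.map_mul]
  have h3 := congrArg Matrix.det h1
  rw [det_mul, det_one] at h3
  rw [h2, det_mul, det_mul, mul_comm ((Φ.map (C : R →+* R[X])).det) _, mul_assoc, h3, mul_one]

private lemma coeff_comp_neg_X {R : Type*} [CommRing R] (p : R[X]) (k : ℕ) :
    (p.comp (-X)).coeff k = (-1) ^ k * p.coeff k := by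
  induction p using Polynomial.induction_on' with
  | add p q hp hq => simp [add_comp, hp, hq, mul_add]
  | monomial i a =>
      simp only [monomial_comp, coeff_monomial]
      rw [neg_pow, show ((-1 : R[X]) ^ i) = C ((-1 : R) ^ i) by
        rw [map_pow, C_neg, C_1], ← mul_assoc, ← C_mul, coeff_C_mul, coeff_X_pow]
      by_cases h : i = k
      · subst h; simp; ring
      · simp [h, Ne.symm h]

private lemma charpoly_neg' {R : Type*} [CommRing R] {n : ℕ}
    (M : Matrix (Fin n) (Fin n) R) (k : ℕ) :
    (-M).charpoly.coeff k = (-1) ^ (n + k) * M.charpoly.coeff k := by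
  have key : (charmatrix M).map (aeval (-X : R[X])).toRingHom = -(charmatrix (-M)) :=
    Matrix.ext fun i j => by
      by_cases h : i = j
      · subst h
        rw [Matrix.map_apply, charmatrix_apply_eq, Matrix.neg_apply, charmatrix_apply_eq]
        simp only [map_sub, AlgHom.toRingHom_eq_coe, RingHom.coe_coe, aeval_X, aeval_C,
          Matrix.neg_apply, map_neg, algebraMap_eq]
        ring
      · rw [Matrix.map_apply, charmatrix_apply_ne _ _ _ h, Matrix.neg_apply,
          charmatrix_apply_ne _ _ _ h, Matrix.neg_apply]
        simp only [map_neg, AlgHom.toRingHom_eq_coe, RingHom.coe_coe, aeval_C, algebraMap_eq]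
        ring
  have hdet : (aeval (-X : R[X])).toRingHom M.charpoly = ((charmatrix M).map
      ((aeval (-X : R[X])).toRingHom : R[X] →+* R[X])).det := by
    rw [Matrix.charpoly, RingHom.map_det, RingHom.mapMatrix_apply]
  rw [key, Matrix.det_neg, Fintype.card_fin, ← Matrix.charpoly] at hdet
  have hcomp : M.charpoly.comp (-X) = (-1 : R[X]) ^ n * (-M).charpoly := by
    rw [Polynomial.comp, ← Polynomial.algebraMap_eq, ← aeval_def]
    exact hdet
  have hc := congrArg (fun p => p.coeff k) hcomp
  simp only [coeff_comp_neg_X] at hc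
  rw [show ((-1 : R[X]) ^ n) = C ((-1 : R) ^ n) by rw [map_pow, C_neg, C_1],
    coeff_C_mul] at hc
  have hn : ((-1 : R) ^ n) * ((-1 : R) ^ n) = 1 := by
    rw [← pow_add, ← two_mul, pow_mul]; simp
  calc (-M).charpoly.coeff k
      = ((-1:R)^n) * ((-1:R)^n * (-M).charpoly.coeff k) := by rw [← mul_assoc, hn, one_mul]
    _ = ((-1:R)^n) * ((-1:R)^k * M.charpoly.coeff k) := by rw [← hc]
    _ = (-1) ^ (n + k) * M.charpoly.coeff k := by rw [pow_add]; ring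

/-- §2.3–2.4: the characteristic polynomial of an element `θ` of a unitary Lie algebra
(`Φ·θ = −(σθ)ᵀ·Φ` with `Φ` invertible, `σ` an involution) has coefficients satisfying
`σ(coeff_k) = (−1)^(n−k)·coeff_k`. -/
theorem stmt_2 (R : Type*) [CommRing R] (σ : R →+* R) (hσ : σ.comp σ = RingHom.id R)
    (n : ℕ) (Φ θ : Matrix (Fin n) (Fin n) R) (hΦ : IsUnit Φ.det)
    (hθ : Φ * θ = -((θ.map σ)ᵀ * Φ)) :
    ∀ k ≤ n, σ ((Matrix.charpoly θ).coeff k) =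
      (-1) ^ (n - k) * (Matrix.charpoly θ).coeff k := by
  intro k hk
  have hconj : (θ.map σ)ᵀ = Φ * (-θ) * Φ⁻¹ := by
    have h1 : (θ.map σ)ᵀ * Φ = Φ * (-θ) := by
      rw [Matrix.mul_neg, ← neg_eq_iff_eq_neg, hθ]
    calc (θ.map σ)ᵀ = (θ.map σ)ᵀ * (Φ * Φ⁻¹) := by
          rw [Matrix.mul_nonsing_inv _ hΦ, mul_one]
      _ = ((θ.map σ)ᵀ * Φ) * Φ⁻¹ := by rw [mul_assoc]
      _ = Φ * (-θ) * Φ⁻¹ := by rw [h1]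
  have key : σ (θ.charpoly.coeff k) = (-θ).charpoly.coeff k := by
    rw [← Polynomial.coeff_map, ← Matrix.charpoly_map,
      ← charpoly_transpose' (θ.map σ), hconj, charpoly_conj' _ _ hΦ]
  rw [key, charpoly_neg']
  congr 1
  have h : n + k = (n - k) + 2 * k := by omega
  rw [h, pow_add, pow_mul]
  simp
end

section
/- Let R be a commutative ring in which 2 is invertible and let n ≥ 1. There exist polynomials b_1, …, b_n in the polynomial ring R[a_1, …, a_n] such that: (i) each b_i is weighted homogeneous of degree i for the grading in which the variable a_j has weight j; (ii) each b_i − (1/2)·a_i is a polynomial in the variables a_1, …, a_{i−1} only; (iii) the n×n matrix M over R[a_1,…,a_n] whose first row is (−b_1, −b_2, …, −b_{n−1}, −2b_n), whose subdiagonal entries M_{i+1,i} (1 ≤ i ≤ n−1) all equal 1, whose last-column entries below the first row are M_{i,n} = −b_{n+1−i} for 2 ≤ i ≤ n, and whose remaining entries are 0, has characteristic polynomial det(X·1 − M) = X^n + a_1 X^{n−1} + ⋯ + a_n. -/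
/-!
Put `β₀ = 1, βᵢ = bᵢ` and `α₀ = 1, αᵢ = aᵢ`, and let `qₖ = Xᵏ + β₁Xᵏ⁻¹ + ⋯ + βₖ`.
The vector `v = (qₙ₋₁, …, q₁, q₀)` is annihilated by every row of `X·1 − M` except the first,
and its last entry is `1`. Replacing the last column of `X·1 − M` by `(X·1 − M) v` and expanding
along it (the remaining minor is triangular with diagonal `−1`, so the signs cancel) shows that
`det (X·1 − M)` is the first entry of `(X·1 − M) v`, namely
`∑ⱼ βⱼ qₙ₋ⱼ = ∑ₛ (∑_{j+k=s} βⱼ βₖ) Xⁿ⁻ˢ`. The characteristic polynomial is thus the prescribed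
one as soon as `(∑ βₛ tˢ)² = ∑ αₛ tˢ`, i.e. as soon as the `βₛ` are the coefficients of the
square root of `1 + a₁t + ⋯ + aₙtⁿ`. Since 2 is invertible these are determined recursively by
`2βₛ = αₛ − ∑_{0<j<s} βⱼ βₛ₋ⱼ`, and the recursion shows that `βₛ` is weighted homogeneous of
degree `s` and that `βₛ − αₛ/2` only involves `a₁, …, aₛ₋₁`.
-/

open MvPolynomial

namespace Matrix

theorem det_eq_of_mulVec_apply_eq_zero {S : Type*} [CommRing S] {m : ℕ}
    (A : Matrix (Fin (m + 1)) (Fin (m + 1)) S) (v : Fin (m + 1) → S) (hv : v (Fin.last m) = 1)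
    (hAv : ∀ i, i ≠ 0 → (A *ᵥ v) i = 0) :
    A.det = (-1) ^ m * (A *ᵥ v) 0 * (A.submatrix Fin.succ Fin.castSucc).det := by
  have hcol : (A.updateCol (Fin.last m) (A *ᵥ v)).det = A.det := by
    rw [← one_smul S A.det, ← hv, ← A.det_updateCol_sum]
    simp only [smul_eq_mul, mul_comm]
    rfl
  have hminor : (A.updateCol (Fin.last m) (A *ᵥ v)).submatrix Fin.succ Fin.castSucc =
      A.submatrix Fin.succ Fin.castSucc := by
    ext i j
    simp
  rw [← hcol, det_succ_column _ (Fin.last m), Fin.sum_univ_succ, Finset.sum_eq_zero]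
  · simp [hminor]
  · intro i _
    simp [hAv i.succ (Fin.succ_ne_zero i)]

end Matrix

namespace Polynomial

open Finset

variable {S : Type*} [CommRing S]

noncomputable def truncPoly (β : ℕ → S) (k : ℕ) : S[X] :=
  ∑ q ∈ antidiagonal k, C (β q.1) * X ^ q.2

theorem truncPoly_zero (β : ℕ → S) : truncPoly β 0 = C (β 0) := by
  simp [truncPoly]

theorem truncPoly_succ (β : ℕ → S) (k : ℕ) :
    truncPoly β (k + 1) = X * truncPoly β k + C (β (k + 1)) := by
  rw [truncPoly, truncPoly, Nat.sum_antidiagonal_succ', mul_sum, add_comm]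
  simp only [pow_zero, mul_one, pow_succ]
  congr 1
  exact sum_congr rfl fun q _ => by ring

theorem sum_antidiagonal_C_mul_truncPoly (β : ℕ → S) (N : ℕ) :
    ∑ p ∈ antidiagonal N, C (β p.1) * truncPoly β p.2 =
      ∑ p ∈ antidiagonal N, C (PowerSeries.coeff p.1 (PowerSeries.mk β ^ 2)) * X ^ p.2 := by
  set B : PowerSeries S[X] := PowerSeries.map C (PowerSeries.mk β)
  set G : PowerSeries S[X] := PowerSeries.mk (X ^ ·)
  have hL : ∀ k, truncPoly β k = PowerSeries.coeff k (B * G) := fun k => by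
    simp [truncPoly, PowerSeries.coeff_mul, B, G]
  have hR : ∀ k, C (PowerSeries.coeff k (PowerSeries.mk β ^ 2)) = PowerSeries.coeff k (B * B) :=
    fun k => by rw [← map_mul, ← sq, PowerSeries.coeff_map]
  calc ∑ p ∈ antidiagonal N, C (β p.1) * truncPoly β p.2
      = PowerSeries.coeff N (B * (B * G)) := by simp [PowerSeries.coeff_mul, hL, B]
    _ = PowerSeries.coeff N (B * B * G) := by rw [mul_assoc]
    _ = _ := by rw [PowerSeries.coeff_mul]; simp [hR, G]

end Polynomial

namespace Matrix

open scoped Polynomial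
open Finset
open Polynomial (truncPoly truncPoly_zero truncPoly_succ sum_antidiagonal_C_mul_truncPoly)

variable {S : Type*} [CommRing S]

def kostantMatrix {n : ℕ} (b : Fin n → S) : Matrix (Fin n) (Fin n) S :=
  of fun i j =>
    if (i : ℕ) = 0 then (if (j : ℕ) = n - 1 then -(2 * b j) else -(b j))
    else if (j : ℕ) + 1 = (i : ℕ) then 1
    else if (j : ℕ) = n - 1 then -(b i.rev)
    else 0

theorem charmatrix_kostantMatrix_apply {m : ℕ} (b : Fin (m + 1) → S) (i j : Fin (m + 1)) :
    charmatrix (kostantMatrix b) i j =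
      (if i = j then Polynomial.X else 0) + (if i = 0 then Polynomial.C (b j) else 0) -
        (if (j : ℕ) + 1 = i then 1 else 0) +
        (if j = Fin.last m then Polynomial.C (b i.rev) else 0) := by
  rw [charmatrix_apply, diagonal_apply, kostantMatrix, of_apply]
  have hj : j = Fin.last m ↔ (j : ℕ) = m := Fin.ext_iff
  rcases eq_or_ne i 0 with rfl | hi
  · by_cases hjm : j = Fin.last m
    · simp [hjm, two_mul]
      ring
    · simp [hjm, hj.not.mp hjm]
  · have hi' : (i : ℕ) ≠ 0 := Fin.val_ne_iff.mpr hi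
    by_cases hjm : j = Fin.last m
    · simp [hjm, hi, hi', i.isLt.ne']
    · by_cases hji : (j : ℕ) + 1 = i
      · have hij : i ≠ j := by rintro rfl; omega
        simp [hi, hi', hjm, hji, hij]
      · simp [hi, hi', hjm, hj.not.mp hjm, hji]

theorem charmatrix_kostantMatrix_mulVec_apply {m : ℕ} (b : Fin (m + 1) → S)
    (v : Fin (m + 1) → S[X]) (i : Fin (m + 1)) :
    (charmatrix (kostantMatrix b) *ᵥ v) i =
      Polynomial.X * v i + (if i = 0 then ∑ j, Polynomial.C (b j) * v j else 0) -
        (∑ j : Fin (m + 1), if (j : ℕ) + 1 = i then v j else 0) +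
        Polynomial.C (b i.rev) * v (Fin.last m) := by
  simp only [mulVec, dotProduct, charmatrix_kostantMatrix_apply, add_mul, sub_mul,
    sum_add_distrib, sum_sub_distrib, ite_mul, zero_mul, one_mul, sum_ite_eq, sum_ite_eq',
    mem_univ, if_true, sum_ite_irrel, sum_const_zero]

theorem det_submatrix_charmatrix_kostantMatrix {m : ℕ} (b : Fin (m + 1) → S) :
    ((charmatrix (kostantMatrix b)).submatrix Fin.succ Fin.castSucc).det = (-1) ^ m := by
  rw [det_of_isUpperTriangular]
  · simp only [submatrix_apply, charmatrix_kostantMatrix_apply]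
    simp [(Fin.castSucc_lt_last _).ne, Fin.castSucc_lt_succ.ne']
  · intro i j hij
    have hne : i.succ ≠ j.castSucc :=
      (Fin.castSucc_lt_succ.trans (Fin.succ_lt_succ_iff.mpr hij)).ne'
    have hne' : (j : ℕ) ≠ i := (Fin.val_fin_lt.mpr hij).ne
    simp only [submatrix_apply, charmatrix_kostantMatrix_apply]
    simp [(Fin.castSucc_lt_last _).ne, hne, hne']

theorem charpoly_kostantMatrix (β : ℕ → S) (hβ : β 0 = 1) (m : ℕ) :
    (kostantMatrix fun j : Fin (m + 1) => β (j + 1)).charpoly =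
      ∑ p ∈ antidiagonal (m + 1),
        Polynomial.C (PowerSeries.coeff p.1 (PowerSeries.mk β ^ 2)) * Polynomial.X ^ p.2 := by
  set A := charmatrix (kostantMatrix fun j : Fin (m + 1) => β (j + 1))
  set v : Fin (m + 1) → S[X] := fun j => truncPoly β (m - j)
  have hv : v (Fin.last m) = 1 := by simp [v, truncPoly_zero, hβ]
  have hrow : ∀ i, i ≠ 0 → (A *ᵥ v) i = 0 := by
    intro i hi
    obtain ⟨i, rfl⟩ := Fin.exists_succ_eq.mpr hi
    have hm : m - i = m - (i + 1) + 1 := by omega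
    rw [charmatrix_kostantMatrix_mulVec_apply, if_neg hi, sum_eq_single i.castSucc]
    · simp [v, hv, hm, truncPoly_succ]
    · intro j _ hj
      rw [if_neg fun h => hj (Fin.ext (by simp at h ⊢; omega))]
    · simp
  have hrow0 : (A *ᵥ v) 0 = ∑ p ∈ antidiagonal (m + 1), Polynomial.C (β p.1) * truncPoly β p.2 := by
    rw [charmatrix_kostantMatrix_mulVec_apply, if_pos rfl, Nat.sum_antidiagonal_succ,
      Nat.sum_antidiagonal_eq_sum_range_succ_mk, ← Fin.sum_univ_eq_sum_range]
    simp [v, hv, truncPoly_succ, hβ]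
    ring
  rw [charpoly, det_eq_of_mulVec_apply_eq_zero A v hv hrow, hrow0,
    det_submatrix_charmatrix_kostantMatrix, sum_antidiagonal_C_mul_truncPoly,
    mul_right_comm, ← mul_pow, neg_one_mul, neg_neg, one_pow, one_mul]

end Matrix

theorem Subalgebra.sum_mul_mem_of_monotone {R S : Type*} [CommRing R] [CommRing S] [Algebra R S]
    {A : ℕ → Subalgebra R S} (hA : Monotone A) {β : ℕ → S} {s : ℕ}
    (hβ : ∀ j ≤ s, β j ∈ A j) : ∑ k : Fin s, β (k + 1) * β (s - k) ∈ A s :=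
  sum_mem fun k _ => mul_mem (hA (by omega) (hβ _ (by omega))) (hA (by omega) (hβ _ (by omega)))

section SqrtCoeff

variable (R : Type*) {S : Type*} [CommRing R] [Invertible (2 : R)] [CommRing S] [Algebra R S]

noncomputable def sqrtCoeff (α : ℕ → S) : ℕ → S
  | 0 => 1
  | s + 1 => ⅟(2 : R) • (α (s + 1) - ∑ k : Fin s, sqrtCoeff α (k + 1) * sqrtCoeff α (s - k))

variable {R}

theorem sqrtCoeff_zero (α : ℕ → S) : sqrtCoeff R α 0 = 1 := by
  rw [sqrtCoeff]

theorem sqrtCoeff_succ (α : ℕ → S) (s : ℕ) :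
    sqrtCoeff R α (s + 1) =
      ⅟(2 : R) • (α (s + 1) - ∑ k : Fin s, sqrtCoeff R α (k + 1) * sqrtCoeff R α (s - k)) := by
  rw [sqrtCoeff]

theorem PowerSeries.mk_sqrtCoeff_sq {α : ℕ → S} (hα : α 0 = 1) :
    PowerSeries.mk (sqrtCoeff R α) ^ 2 = PowerSeries.mk α := by
  ext (_ | s)
  · simp [sq, sqrtCoeff_zero, hα]
  · rw [sq, PowerSeries.coeff_mul, Finset.Nat.sum_antidiagonal_succ,
      Finset.Nat.sum_antidiagonal_eq_sum_range_succ_mk, Finset.sum_range_succ]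
    simp only [PowerSeries.coeff_mk, sqrtCoeff_zero, Nat.sub_self, one_mul, mul_one]
    rw [← Fin.sum_univ_eq_sum_range (fun k => sqrtCoeff R α (k + 1) * sqrtCoeff R α (s - k)),
      sqrtCoeff_succ, add_left_comm, ← add_smul, invOf_two_add_invOf_two, one_smul,
      add_sub_cancel]

theorem sqrtCoeff_mem {A : ℕ → Subalgebra R S} (hA : Monotone A) {α : ℕ → S}
    (hα : ∀ s, α s ∈ A s) (s : ℕ) : sqrtCoeff R α s ∈ A s := by
  induction s using Nat.strong_induction_on with
  | _ s ih =>
    rcases s with _ | s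
    · rw [sqrtCoeff_zero]
      exact one_mem _
    · rw [sqrtCoeff_succ]
      refine Subalgebra.smul_mem _ (sub_mem (hα _) ?_) _
      exact hA s.le_succ (Subalgebra.sum_mul_mem_of_monotone hA fun j _ => ih j (by omega))

theorem sqrtCoeff_succ_sub_smul_mem {A : ℕ → Subalgebra R S} (hA : Monotone A) {α : ℕ → S}
    (hα : ∀ s, α s ∈ A s) (s : ℕ) : sqrtCoeff R α (s + 1) - ⅟(2 : R) • α (s + 1) ∈ A s := by
  rw [sqrtCoeff_succ, smul_sub, sub_sub_cancel_left]
  exact neg_mem (Subalgebra.smul_mem _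
    (Subalgebra.sum_mul_mem_of_monotone hA fun j _ => sqrtCoeff_mem hA hα j) _)

theorem MvPolynomial.isWeightedHomogeneous_sqrtCoeff {σ : Type*} (w : σ → ℕ)
    {α : ℕ → MvPolynomial σ R} (hα : ∀ s, (α s).IsWeightedHomogeneous w s) (s : ℕ) :
    (sqrtCoeff R α s).IsWeightedHomogeneous w s := by
  induction s using Nat.strong_induction_on with
  | _ s ih =>
    rcases s with _ | s
    · rw [sqrtCoeff_zero]
      exact isWeightedHomogeneous_one R w
    · rw [sqrtCoeff_succ, ← mem_weightedHomogeneousSubmodule]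
      refine Submodule.smul_of_tower_mem _ _ (sub_mem (hα _) (sum_mem fun k _ => ?_))
      have hk := (ih (k + 1) (by omega)).mul (ih (s - k) (by omega))
      rwa [show (k : ℕ) + 1 + (s - k) = s + 1 by omega] at hk

end SqrtCoeff

namespace MvPolynomial

noncomputable def universalCoeff (n : ℕ) (R : Type*) [CommRing R] : ℕ → MvPolynomial (Fin n) R
  | 0 => 1
  | i + 1 => if h : i < n then X ⟨i, h⟩ else 0

open Finset

variable {n : ℕ} {R : Type*} [CommRing R]

theorem universalCoeff_succ (i : Fin n) : universalCoeff n R (i + 1) = X i := by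
  simp [universalCoeff]

theorem isWeightedHomogeneous_universalCoeff (s : ℕ) :
    (universalCoeff n R s).IsWeightedHomogeneous (fun j : Fin n => (j : ℕ) + 1) s := by
  rcases s with _ | i
  · exact isWeightedHomogeneous_one R _
  · rw [universalCoeff]
    split_ifs with h
    · exact isWeightedHomogeneous_X R _ (⟨i, h⟩ : Fin n)
    · exact isWeightedHomogeneous_zero R _ _

theorem universalCoeff_mem_supported (s : ℕ) :
    universalCoeff n R s ∈ supported R {j : Fin n | (j : ℕ) < s} := by
  rcases s with _ | i
  · exact one_mem _
  · rw [universalCoeff]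
    split_ifs with h
    · exact Algebra.subset_adjoin (Set.mem_image_of_mem X (Nat.lt_succ_self i))
    · exact zero_mem _

theorem sum_antidiagonal_universalCoeff :
    ∑ p ∈ antidiagonal n, Polynomial.C (universalCoeff n R p.1) * Polynomial.X ^ p.2 =
      Polynomial.X ^ n + ∑ i : Fin n, Polynomial.C (X i) * Polynomial.X ^ (n - 1 - (i : ℕ)) := by
  rw [Nat.sum_antidiagonal_eq_sum_range_succ_mk, sum_range_succ', add_comm, sum_range]
  congr 1
  · simp [universalCoeff]
  · refine Fintype.sum_congr _ _ fun i => ?_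
    simp [universalCoeff, Nat.sub_sub, add_comm]

end MvPolynomial

theorem stmt_3_general (R : Type*) [CommRing R] [Invertible (2 : R)] (n : ℕ) :
    ∃ b : Fin n → MvPolynomial (Fin n) R,
      (∀ i : Fin n,
        (b i).IsWeightedHomogeneous (fun j : Fin n => (j : ℕ) + 1) ((i : ℕ) + 1)) ∧
      (∀ i : Fin n,
        b i - C (⅟(2 : R)) * X i ∈ MvPolynomial.supported R {j : Fin n | j < i}) ∧
      Matrix.charpoly (Matrix.of fun i j : Fin n =>
          if (i : ℕ) = 0 then (if (j : ℕ) = n - 1 then -(2 * b j) else -(b j))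
          else if (j : ℕ) + 1 = (i : ℕ) then 1
          else if (j : ℕ) = n - 1 then -(b i.rev)
          else 0) =
        Polynomial.X ^ n +
          ∑ i : Fin n, Polynomial.C (X i) * Polynomial.X ^ (n - 1 - (i : ℕ)) := by
  rcases n with _ | m
  · exact ⟨finZeroElim, finZeroElim, finZeroElim, by simp [Matrix.charpoly]⟩
  set β := sqrtCoeff R (universalCoeff (m + 1) R)
  refine ⟨fun i => β (i + 1), fun i => isWeightedHomogeneous_sqrtCoeff _
    isWeightedHomogeneous_universalCoeff _, fun i => ?_, ?_⟩
  · have hmono : Monotone fun s => supported R {j : Fin (m + 1) | (j : ℕ) < s} :=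
      fun s t hst => supported_mono fun j (hj : (j : ℕ) < s) => hj.trans_le hst
    simpa [β, universalCoeff_succ, smul_eq_C_mul] using
      sqrtCoeff_succ_sub_smul_mem hmono universalCoeff_mem_supported i
  · have hsq : PowerSeries.mk β ^ 2 = PowerSeries.mk (universalCoeff (m + 1) R) :=
      PowerSeries.mk_sqrtCoeff_sq rfl
    have h := Matrix.charpoly_kostantMatrix β (sqrtCoeff_zero _) m
    simp only [hsq, PowerSeries.coeff_mk, sum_antidiagonal_universalCoeff] at h
    exact h

/-- §2.3: the explicit Kostant section.  Over a ring in which 2 is invertible there are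
polynomials `b_1, …, b_n` (`b i` corresponding to `b_{i+1}`), weighted homogeneous of
degree `i` for the weights `w(a_j) = j`, with `b_i − a_i/2` a polynomial in
`a_1, …, a_{i−1}` only, such that the displayed companion-type matrix has characteristic
polynomial `X^n + a_1 X^{n−1} + ⋯ + a_n`. -/
theorem stmt_3 (R : Type*) [CommRing R] [Invertible (2 : R)] (n : ℕ) (hn : 1 ≤ n) :
    ∃ b : Fin n → MvPolynomial (Fin n) R,
      (∀ i : Fin n,
        (b i).IsWeightedHomogeneous (fun j : Fin n => (j : ℕ) + 1) ((i : ℕ) + 1)) ∧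
      (∀ i : Fin n,
        b i - C (⅟(2 : R)) * X i ∈ MvPolynomial.supported R {j : Fin n | j < i}) ∧
      Matrix.charpoly (Matrix.of fun i j : Fin n =>
          if (i : ℕ) = 0 then (if (j : ℕ) = n - 1 then -(2 * b j) else -(b j))
          else if (j : ℕ) + 1 = (i : ℕ) then 1
          else if (j : ℕ) = n - 1 then -(b i.rev)
          else 0) =
        Polynomial.X ^ n +
          ∑ i : Fin n, Polynomial.C (X i) * Polynomial.X ^ (n - 1 - (i : ℕ)) :=
  stmt_3_general R n
end

section
/- Let k be a field and let n = n₁ + n₂ with n₁, n₂ ≥ 1. Let S = k[b_1,…,b_{n₁}, c_1,…,c_{n₂}] be a polynomial ring and let φ : k[a_1,…,a_n] → S be the k-algebra homomorphism determined by the identity of polynomials X^n + φ(a_1)·X^{n−1} + ⋯ + φ(a_n) = (X^{n₁} + b_1 X^{n₁−1} + ⋯ + b_{n₁})·(X^{n₂} + c_1 X^{n₂−1} + ⋯ + c_{n₂}) in S[X]. Then S is a finitely generated module over k[a_1,…,a_n] via φ. -/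
open MvPolynomial

/-- The generic monic polynomial `X^m + ∑ f i X^(m-1-i)` is monic (for `m ≥ 1`). -/
lemma aux_monic {R : Type*} [CommRing R] (m : ℕ) (hm : 1 ≤ m) (f : Fin m → R) :
    (Polynomial.X ^ m +
      ∑ i : Fin m, Polynomial.C (f i) * Polynomial.X ^ (m - 1 - (i : ℕ))).Monic := by
  apply Polynomial.monic_X_pow_add
  apply lt_of_le_of_lt (Polynomial.degree_sum_le _ _)
  rw [Finset.sup_lt_iff (by exact_mod_cast WithBot.bot_lt_coe m)]
  intro i _
  refine lt_of_le_of_lt (Polynomial.degree_C_mul_X_pow_le _ _) ?_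
  exact_mod_cast (by omega : m - 1 - (i : ℕ) < m)

/-- Extracting the coefficients of the generic monic polynomial. -/
lemma aux_coeff {R : Type*} [CommRing R] (m : ℕ) (f : Fin m → R) (j : Fin m) :
    (Polynomial.X ^ m +
      ∑ i : Fin m, Polynomial.C (f i) * Polynomial.X ^ (m - 1 - (i : ℕ))).coeff
        (m - 1 - (j : ℕ)) = f j := by
  have hj : (j : ℕ) < m := j.isLt
  rw [Polynomial.coeff_add, Polynomial.coeff_X_pow, if_neg (by omega),
    Polynomial.finset_sum_coeff, zero_add]
  rw [Finset.sum_eq_single j]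
  · rw [Polynomial.coeff_C_mul, Polynomial.coeff_X_pow, if_pos rfl, mul_one]
  · intro i _ hne
    rw [Polynomial.coeff_C_mul, Polynomial.coeff_X_pow, if_neg, mul_zero]
    intro h
    exact hne (Fin.ext (by have := i.isLt; omega))
  · intro h; exact absurd (Finset.mem_univ j) h

/-- If a monic polynomial over `A` factors in `S[X]` with a monic factor `Q`, then the
coefficients of `Q` are integral over `A`. -/
lemma aux_coeffs_integral {A S : Type*} [CommRing A] [CommRing S] [IsDomain S] [Algebra A S]
    {P : Polynomial A} (hP : P.Monic) {Q R : Polynomial S} (hQ : Q.Monic)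
    (hfac : P.map (algebraMap A S) = Q * R) (e : ℕ) :
    IsIntegral A (Q.coeff e) := by
  let K := FractionRing S
  letI : Algebra A K := ((algebraMap S K).comp (algebraMap A S)).toAlgebra
  have hmap : algebraMap A K = (algebraMap S K).comp (algebraMap A S) := rfl
  have hg : (Q.map (algebraMap S K)).Monic := hQ.map _
  have hdvd : Q.map (algebraMap S K) ∣ P.map (algebraMap A K) := by
    rw [hmap, ← Polynomial.map_map, hfac, Polynomial.map_mul]
    exact Dvd.intro _ rfl
  have hl := integralClosure.mem_lifts_of_monic_of_dvd_map K hP hg hdvd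
  rw [Polynomial.lifts_iff_coeff_lifts] at hl
  obtain ⟨z, hz⟩ := hl e
  have hzK : IsIntegral A ((algebraMap S K) (Q.coeff e)) := by
    have h2 : (algebraMap (integralClosure A K) K) z = (algebraMap S K) (Q.coeff e) := by
      rw [hz, Polynomial.coeff_map]
    rw [← h2]
    exact z.2
  obtain ⟨p, pm, hp⟩ := hzK
  refine ⟨p, pm, ?_⟩
  apply IsFractionRing.injective S K
  rw [map_zero, ← hp, Polynomial.hom_eval₂, ← hmap]

/-- Lemme 2.7.1 in coordinates: the map `𝔸_H → 𝔸` multiplying monic spectral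
polynomials is finite, i.e. `k[b,c]` is a finite module over `k[a]` via the algebra
map determined by `X^n + ∑ a_i X^{n−i} = (X^{n₁} + ∑ b_i X^{n₁−i})(X^{n₂} + ∑ c_i X^{n₂−i})`. -/
theorem stmt_5 (k : Type*) [Field k] (n₁ n₂ : ℕ) (h₁ : 1 ≤ n₁) (h₂ : 1 ≤ n₂)
    (φ : MvPolynomial (Fin (n₁ + n₂)) k →ₐ[k] MvPolynomial (Fin n₁ ⊕ Fin n₂) k)
    (hφ : Polynomial.X ^ (n₁ + n₂) +
        ∑ i : Fin (n₁ + n₂),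
          Polynomial.C (φ (X i)) * Polynomial.X ^ (n₁ + n₂ - 1 - (i : ℕ)) =
      (Polynomial.X ^ n₁ + ∑ i : Fin n₁,
          Polynomial.C (X (Sum.inl i) : MvPolynomial (Fin n₁ ⊕ Fin n₂) k) *
            Polynomial.X ^ (n₁ - 1 - (i : ℕ))) *
      (Polynomial.X ^ n₂ + ∑ i : Fin n₂,
          Polynomial.C (X (Sum.inr i) : MvPolynomial (Fin n₁ ⊕ Fin n₂) k) *
            Polynomial.X ^ (n₂ - 1 - (i : ℕ)))) :
    φ.toRingHom.Finite := by
  set A := MvPolynomial (Fin (n₁ + n₂)) k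
  set S := MvPolynomial (Fin n₁ ⊕ Fin n₂) k
  letI : Algebra A S := φ.toRingHom.toAlgebra
  have halg : algebraMap A S = φ.toRingHom := rfl
  -- the generic monic polynomial over `A`
  set P : Polynomial A :=
    Polynomial.X ^ (n₁ + n₂) +
      ∑ i : Fin (n₁ + n₂), Polynomial.C (X i : A) * Polynomial.X ^ (n₁ + n₂ - 1 - (i : ℕ))
    with hP
  have hPm : P.Monic := aux_monic (n₁ + n₂) (by omega) _
  set Q₁ : Polynomial S :=
    Polynomial.X ^ n₁ +
      ∑ i : Fin n₁, Polynomial.C (X (Sum.inl i) : S) * Polynomial.X ^ (n₁ - 1 - (i : ℕ))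
    with hQ₁
  set Q₂ : Polynomial S :=
    Polynomial.X ^ n₂ +
      ∑ i : Fin n₂, Polynomial.C (X (Sum.inr i) : S) * Polynomial.X ^ (n₂ - 1 - (i : ℕ))
    with hQ₂
  have hQ₁m : Q₁.Monic := aux_monic n₁ h₁ _
  have hQ₂m : Q₂.Monic := aux_monic n₂ h₂ _
  have hmapP : P.map (algebraMap A S) =
      Polynomial.X ^ (n₁ + n₂) +
        ∑ i : Fin (n₁ + n₂),
          Polynomial.C (φ (X i)) * Polynomial.X ^ (n₁ + n₂ - 1 - (i : ℕ)) := by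
    rw [hP, Polynomial.map_add, Polynomial.map_pow, Polynomial.map_X, Polynomial.map_sum]
    congr 1
    refine Finset.sum_congr rfl fun i _ => ?_
    rw [Polynomial.map_mul, Polynomial.map_C, Polynomial.map_pow, Polynomial.map_X, halg]
    rfl
  have hfac₁ : P.map (algebraMap A S) = Q₁ * Q₂ := by rw [hmapP, hφ]
  have hfac₂ : P.map (algebraMap A S) = Q₂ * Q₁ := by rw [hfac₁, mul_comm]
  -- every variable of `S` is integral over `A`
  have hint : ∀ s : Fin n₁ ⊕ Fin n₂, IsIntegral A (X s : S) := by
    rintro (i | i)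
    · have := aux_coeffs_integral hPm hQ₁m hfac₁ (n₁ - 1 - (i : ℕ))
      rwa [hQ₁, aux_coeff] at this
    · have := aux_coeffs_integral hPm hQ₂m hfac₂ (n₂ - 1 - (i : ℕ))
      rwa [hQ₂, aux_coeff] at this
  -- the variables generate `S` as an `A`-algebra
  haveI : IsScalarTower k A S :=
    IsScalarTower.of_algebraMap_eq' (AlgHom.comp_algebraMap φ).symm
  have hadj : Algebra.adjoin A (Set.range (X : (Fin n₁ ⊕ Fin n₂) → S)) = ⊤ := by
    rw [eq_top_iff]
    intro x _
    have hxk : x ∈ Algebra.adjoin k (Set.range (X : (Fin n₁ ⊕ Fin n₂) → S)) := by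
      rw [MvPolynomial.adjoin_range_X]; trivial
    have hle : Algebra.adjoin k (Set.range (X : (Fin n₁ ⊕ Fin n₂) → S)) ≤
        (Algebra.adjoin A (Set.range (X : (Fin n₁ ⊕ Fin n₂) → S))).restrictScalars k :=
      Algebra.adjoin_le Algebra.subset_adjoin
    exact hle hxk
  rw [RingHom.finite_iff_isIntegral_and_finiteType]
  constructor
  · -- integrality
    intro x
    have hx : x ∈ integralClosure A S := by
      have hsub : Algebra.adjoin A (Set.range (X : (Fin n₁ ⊕ Fin n₂) → S)) ≤
          integralClosure A S := by
        apply Algebra.adjoin_le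
        rintro _ ⟨s, rfl⟩
        exact hint s
      exact hsub (by rw [hadj]; trivial)
    exact hx
  · -- finite type
    classical
    exact ⟨⟨Finset.univ.image X, by
      rw [Finset.coe_image, Finset.coe_univ, Set.image_univ, hadj]⟩⟩
end

section
/- Let O be a complete discrete valuation ring with uniformizer ϖ whose residue field is finite of characteristic p, and let K be its fraction field. Let P ∈ O[T] be a monic polynomial of degree n with 0 < n < p whose image in K[T] is separable. Then there exists an integer m ≥ 0 with the following property: for every monic polynomial P̃ ∈ O[T] of degree n all of whose coefficients are congruent to those of P modulo ϖ^m (i.e. P − P̃ ∈ ϖ^m·O[T]), the O-algebras O[T]/(P) and O[T]/(P̃) are isomorphic. -/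
open Polynomial

lemma newton_root_aux {O : Type*} [CommRing O] [IsDomain O] [IsDiscreteValuationRing O]
    [IsAdicComplete (IsLocalRing.maximalIdeal O) O]
    (ϖ : O) (hϖ : Irreducible ϖ) (P U V : O[X]) (d : O)
    (hres : U * P + V * derivative P = C d) (e : ℕ) (u : Oˣ) (hdu : d = u * ϖ ^ e)
    (Q : O[X]) (hQ : Q.Monic)
    (hPQ : ∀ i, ϖ ^ (2 * e + 1) ∣ (P.coeff i - Q.coeff i)) :
    ∃ L : AdjoinRoot Q, (aeval L P = 0) ∧
      algebraMap O (AdjoinRoot Q) ϖ ∣ (AdjoinRoot.root Q - L) := by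
  set B := AdjoinRoot Q with hB
  set π : B := algebraMap O B ϖ with hπdef
  set t : B := AdjoinRoot.root Q with ht
  let pB : PowerBasis O B := AdjoinRoot.powerBasis' hQ
  haveI : Module.Finite O B := Module.Finite.of_basis pB.basis
  haveI : Algebra.IsIntegral O B := Algebra.IsIntegral.of_finite O B
  -- ϖ lands in the Jacobson radical of B
  have hjac : π ∈ Ideal.jacobson (⊥ : Ideal B) := by
    rw [Ideal.jacobson, Submodule.mem_sInf]
    rintro J ⟨-, hJmax⟩
    haveI := hJmax
    have hc : (Ideal.comap (algebraMap O B) J).IsMaximal :=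
      Ideal.isMaximal_comap_of_isIntegral_of_isMaximal J
    have h2 : Ideal.comap (algebraMap O B) J = IsLocalRing.maximalIdeal O :=
      IsLocalRing.eq_maximalIdeal hc
    have h3 : ϖ ∈ Ideal.comap (algebraMap O B) J := by
      rw [h2]
      exact (IsLocalRing.mem_maximalIdeal ϖ).mpr (mem_nonunits_iff.mpr hϖ.not_isUnit)
    exact Ideal.mem_comap.mp h3
  -- the resultant identity evaluated at any point of B
  have hC : ∀ x : B, aeval x U * aeval x P + aeval x V * aeval x (derivative P)
      = algebraMap O B d := by
    intro x
    have := congrArg (aeval x) hres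
    simpa using this
  have hφd : algebraMap O B d = algebraMap O B u * π ^ e := by
    rw [hdu, map_mul, map_pow]
  have haeval_eval : ∀ (R : O[X]) (z : B), aeval z R = (R.map (algebraMap O B)).eval z := by
    intro R z; rw [aeval_def, eval_map]
  -- initial estimate
  have hPt : π ^ (2 * e + 1) ∣ aeval t P := by
    have h0 : aeval t Q = 0 := by rw [ht, AdjoinRoot.aeval_eq, AdjoinRoot.mk_self]
    have h1 : aeval t P = aeval t (P - Q) := by rw [map_sub, h0, sub_zero]
    rw [h1, aeval_eq_sum_range]
    apply Finset.dvd_sum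
    intro i _
    obtain ⟨c, hc⟩ := hPQ i
    rw [coeff_sub, hc, Algebra.smul_def, map_mul, map_pow]
    exact ⟨algebraMap O B c * t ^ i, by rw [hπdef]; ring⟩
  -- one Newton step
  have step : ∀ (x : B) (k : ℕ), ∃ x' : B,
      (π ^ (2 * e + 1 + k) ∣ aeval x P →
        (π ^ (2 * e + 1 + (k + 1)) ∣ aeval x' P ∧ π ^ (e + 1 + k) ∣ (x' - x))) := by
    intro x k
    by_cases h : π ^ (2 * e + 1 + k) ∣ aeval x P
    · obtain ⟨s, hs⟩ := h
      have hVP' : aeval x V * aeval x (derivative P) =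
          π ^ e * (algebraMap O B u - π * (aeval x U * (π ^ (e + k) * s))) := by
        have h1 := hC x
        rw [hs, hφd] at h1
        linear_combination h1
      have hwu : IsUnit (algebraMap O B u - π * (aeval x U * (π ^ (e + k) * s))) := by
        have ha : IsUnit (algebraMap O B (u : O)) := (u.isUnit).map (algebraMap O B)
        obtain ⟨a, ha'⟩ := ha
        have h2 : IsUnit (1 - (↑a⁻¹ : B) * (π * (aeval x U * (π ^ (e + k) * s)))) := by
          apply Ideal.isUnit_of_sub_one_mem_jacobson_bot
          have heq : (1 - (↑a⁻¹ : B) * (π * (aeval x U * (π ^ (e + k) * s)))) - 1 =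
              π * (-((↑a⁻¹ : B) * (aeval x U * (π ^ (e + k) * s)))) := by ring
          rw [heq]
          exact Ideal.mul_mem_right _ _ hjac
        have h3 : algebraMap O B (u : O) - π * (aeval x U * (π ^ (e + k) * s)) =
            ↑a * (1 - (↑a⁻¹ : B) * (π * (aeval x U * (π ^ (e + k) * s)))) := by
          linear_combination (-1 : B) * ha' + (π * (aeval x U * (π ^ (e + k) * s))) * a.mul_inv
        rw [h3]
        exact a.isUnit.mul h2
      set winv : B := ↑(hwu.unit⁻¹) with hwinv
      have hinv : (algebraMap O B (u : O) - π * (aeval x U * (π ^ (e + k) * s))) * winv = 1 :=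
        hwu.mul_val_inv
      refine ⟨x + -(aeval x V * winv * (π ^ (e + 1 + k) * s)), fun _ => ?_⟩
      obtain ⟨kk, hkk⟩ :=
        (P.map (algebraMap O B)).binomExpansion x (-(aeval x V * winv * (π ^ (e + 1 + k) * s)))
      rw [derivative_map] at hkk
      rw [← haeval_eval, ← haeval_eval, ← haeval_eval] at hkk
      constructor
      · rw [hkk]
        have hP'y : aeval x (derivative P) * -(aeval x V * winv * (π ^ (e + 1 + k) * s)) =
            -(aeval x P) := by
          rw [hs]
          linear_combination (-(winv * (π ^ (e + 1 + k) * s))) * hVP' -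
            (π ^ (2 * e + 1 + k) * s) * hinv
        rw [hP'y, hs]
        exact ⟨kk * (aeval x V * winv * s) ^ 2 * π ^ k, by ring⟩
      · exact ⟨-(aeval x V * winv * s), by ring⟩
    · exact ⟨x, fun hh => absurd hh h⟩
  choose nxt hnxt using step
  set seq : ℕ → B := fun k => Nat.rec (motive := fun _ => B) t (fun k x => nxt x k) k with hseqdef
  have hInv : ∀ k, π ^ (2 * e + 1 + k) ∣ aeval (seq k) P := by
    intro k
    induction k with
    | zero => exact hPt
    | succ k ih => exact (hnxt (seq k) k ih).1
  have hdiff : ∀ k, π ^ (e + 1 + k) ∣ seq (k + 1) - seq k := by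
    intro k; exact (hnxt (seq k) k (hInv k)).2
  have hgap : ∀ m n, m ≤ n → π ^ (e + 1 + m) ∣ seq n - seq m := by
    intro m n h
    induction n, h using Nat.le_induction with
    | base => simpa using dvd_zero _
    | succ n hmn ih =>
      have h1 := hdiff n
      have h2 : seq (n + 1) - seq m = (seq (n + 1) - seq n) + (seq n - seq m) := by ring
      rw [h2]
      exact dvd_add (dvd_trans (pow_dvd_pow π (by omega)) h1) ih
  -- pass to coordinates
  set coords : B ≃ₗ[O] (Fin pB.dim → O) := pB.basis.equivFun with hcoords
  have hIpow : ∀ k : ℕ, ((IsLocalRing.maximalIdeal O) ^ k • ⊤ : Submodule O O)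
      = Ideal.span {ϖ ^ k} := by
    intro k
    rw [Ideal.smul_eq_mul, Ideal.mul_top,
      (IsDiscreteValuationRing.irreducible_iff_uniformizer _).mp hϖ, Ideal.span_singleton_pow]
  have hdvd_iff : ∀ (k : ℕ) (z : B), π ^ k ∣ z ↔ ∀ i, ϖ ^ k ∣ coords z i := by
    intro k z
    constructor
    · rintro ⟨y, hy⟩ i
      have h1 : z = ϖ ^ k • y := by rw [hy, Algebra.smul_def, map_pow, hπdef]
      rw [h1, map_smul]
      exact ⟨coords y i, by simp⟩
    · intro hi
      choose c hc using hi
      have h1 : coords z = ϖ ^ k • c := by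
        funext i; simpa using hc i
      have h2 := congrArg coords.symm h1
      rw [coords.symm_apply_apply, map_smul] at h2
      exact ⟨coords.symm c, by rw [h2, Algebra.smul_def, map_pow, hπdef]⟩
  have hcau : ∀ i : Fin pB.dim, ∃ Li : O, ∀ k,
      coords (seq k) i ≡ Li [SMOD ((IsLocalRing.maximalIdeal O) ^ k • ⊤ : Submodule O O)] := by
    intro i
    apply IsPrecomplete.prec (inferInstance : IsPrecomplete (IsLocalRing.maximalIdeal O) O)
    intro m n hmn
    rw [SModEq.sub_mem, hIpow, Ideal.mem_span_singleton]
    have h1 : π ^ m ∣ seq n - seq m := dvd_trans (pow_dvd_pow π (by omega)) (hgap m n hmn)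
    have h2 := (hdvd_iff m _).mp h1 i
    have h3 : ϖ ^ m ∣ coords (seq n) i - coords (seq m) i := by
      simpa [Pi.sub_apply] using h2
    have h4 := dvd_neg.mpr h3
    rwa [neg_sub] at h4
  choose Lc hLc using hcau
  set L : B := coords.symm Lc with hL
  have hLk : ∀ k, π ^ k ∣ L - seq k := by
    intro k
    rw [hdvd_iff]
    intro i
    have h1 := hLc i k
    rw [SModEq.sub_mem, hIpow, Ideal.mem_span_singleton] at h1
    have h2 : coords (L - seq k) i = -(coords (seq k) i - Lc i) := by
      rw [map_sub, Pi.sub_apply, hL, coords.apply_symm_apply]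
      ring
    rw [h2]
    exact dvd_neg.mpr h1
  have hL0 : aeval L P = 0 := by
    have hdvdall : ∀ k : ℕ, π ^ k ∣ aeval L P := by
      intro k
      have h1 : L - seq k ∣ aeval L P - aeval (seq k) P := by
        rw [haeval_eval, haeval_eval]
        exact sub_dvd_eval_sub L (seq k) (P.map (algebraMap O B))
      have h2 : π ^ k ∣ aeval L P - aeval (seq k) P := dvd_trans (hLk k) h1
      have h3 : π ^ k ∣ aeval (seq k) P := dvd_trans (pow_dvd_pow π (by omega)) (hInv k)
      simpa using dvd_add h2 h3
    have hcoord0 : ∀ i, coords (aeval L P) i = 0 := by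
      intro i
      apply IsHausdorff.haus (inferInstance : IsHausdorff (IsLocalRing.maximalIdeal O) O)
      intro k
      rw [SModEq.sub_mem, sub_zero, hIpow, Ideal.mem_span_singleton]
      exact (hdvd_iff k _).mp (hdvdall k) i
    have hz : coords (aeval L P) = 0 := funext hcoord0
    exact (LinearEquiv.map_eq_zero_iff coords).mp hz
  refine ⟨L, hL0, ?_⟩
  have h1 : π ∣ seq 1 - t := by
    have h := hgap 0 1 (by omega)
    have h' := dvd_trans (pow_dvd_pow π (by omega : 1 ≤ e + 1 + 0)) h
    rw [pow_one] at h'; exact h'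
  have h2 : π ∣ L - seq 1 := by simpa using hLk 1
  have h3 : t - L = -((seq 1 - t) + (L - seq 1)) := by ring
  rw [h3]
  exact dvd_neg.mpr (dvd_add h1 h2)

/-- Lemme 4.3.1: over a complete discrete valuation ring `O` with finite residue
field of characteristic `p`, fraction field `K` and uniformizer `ϖ`, for a monic
separable-over-`K` polynomial `P` of degree `n` with `0 < n < p` there is `m ≥ 0`
such that every monic `P̃` of degree `n` congruent to `P` modulo `ϖ^m` has
`O[T]/(P̃) ≃ O[T]/(P)` as `O`-algebras. -/
theorem stmt_12 (O K : Type*) [CommRing O] [IsDomain O] [IsDiscreteValuationRing O]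
    [IsAdicComplete (IsLocalRing.maximalIdeal O) O]
    [Field K] [Algebra O K] [IsFractionRing O K]
    (p : ℕ) [Fact p.Prime] [Finite (IsLocalRing.ResidueField O)]
    [CharP (IsLocalRing.ResidueField O) p]
    (ϖ : O) (hϖ : Irreducible ϖ)
    (P : O[X]) (hP : P.Monic) (n : ℕ) (hn : P.natDegree = n) (hn0 : 0 < n)
    (hnp : n < p) (hsep : (P.map (algebraMap O K)).Separable) :
    ∃ m : ℕ, ∀ Q : O[X], Q.Monic → Q.natDegree = n →
      (∀ i : ℕ, ϖ ^ m ∣ (P.coeff i - Q.coeff i)) →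
      Nonempty ((O[X] ⧸ Ideal.span {P}) ≃ₐ[O] (O[X] ⧸ Ideal.span {Q})) := by
  classical
  have hinj : Function.Injective (algebraMap O K) := IsFractionRing.injective O K
  obtain ⟨A, Bq, hAB⟩ := hsep
  obtain ⟨a, ha⟩ := IsLocalization.integerNormalization_map_to_map (nonZeroDivisors O) A
  obtain ⟨b, hb⟩ := IsLocalization.integerNormalization_map_to_map (nonZeroDivisors O) Bq
  have ha' : (IsLocalization.integerNormalization (nonZeroDivisors O) A).map (algebraMap O K)
      = C (algebraMap O K (a : O)) * A := by
    rw [ha, ← algebraMap_smul K ((a : O)) A, smul_eq_C_mul]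
  have hb' : (IsLocalization.integerNormalization (nonZeroDivisors O) Bq).map (algebraMap O K)
      = C (algebraMap O K (b : O)) * Bq := by
    rw [hb, ← algebraMap_smul K ((b : O)) Bq, smul_eq_C_mul]
  have hd0 : (a : O) * (b : O) ≠ 0 :=
    nonZeroDivisors.ne_zero (mul_mem a.2 b.2)
  have hres : (C (b : O) * IsLocalization.integerNormalization (nonZeroDivisors O) A) * P
      + (C (a : O) * IsLocalization.integerNormalization (nonZeroDivisors O) Bq) * derivative P
      = C ((a : O) * (b : O)) := by
    apply Polynomial.map_injective (algebraMap O K) hinj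
    simp only [Polynomial.map_add, Polynomial.map_mul, Polynomial.map_C, ha', hb',
      ← derivative_map, _root_.map_mul, C_mul]
    linear_combination (C ((algebraMap O K) (a : O)) * C ((algebraMap O K) (b : O))) * hAB
  obtain ⟨e, u, hdu⟩ := IsDiscreteValuationRing.eq_unit_mul_pow_irreducible hd0 hϖ
  refine ⟨2 * e + 1, fun Q hQ hQn hPQ => ?_⟩
  obtain ⟨L, hL0, hLt⟩ := newton_root_aux ϖ hϖ P _ _ _ hres e u hdu Q hQ hPQ
  let f : AdjoinRoot P →ₐ[O] AdjoinRoot Q := AdjoinRoot.liftAlgHom P (Algebra.ofId O _) L hL0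
  let pB : PowerBasis O (AdjoinRoot Q) := AdjoinRoot.powerBasis' hQ
  haveI : Module.Finite O (AdjoinRoot Q) := Module.Finite.of_basis pB.basis
  have hjacO : Ideal.span {ϖ} ≤ Ideal.jacobson (⊥ : Ideal O) := by
    rw [Ideal.span_le, Set.singleton_subset_iff]
    exact IsAdicComplete.le_jacobson_bot (IsLocalRing.maximalIdeal O)
      ((IsLocalRing.mem_maximalIdeal ϖ).mpr (mem_nonunits_iff.mpr hϖ.not_isUnit))
  have htop : (⊤ : Submodule O (AdjoinRoot Q)) ≤ LinearMap.range f.toLinearMap := by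
    apply Submodule.le_of_le_smul_of_le_jacobson_bot (Module.finite_def.mp inferInstance) hjacO
    intro x hx
    have hxmem : x ∈ Submodule.span O (Set.range pB.basis) := by
      rw [pB.basis.span_eq]; trivial
    refine Submodule.span_le.mpr ?_ hxmem
    rintro _ ⟨i, rfl⟩
    have hbi : pB.basis i = AdjoinRoot.root Q ^ (i : ℕ) := by
      rw [pB.basis_eq_pow]; rfl
    obtain ⟨z, hz⟩ := sub_dvd_pow_sub_pow (AdjoinRoot.root Q) L (i : ℕ)
    obtain ⟨y, hy⟩ := hLt
    have hdecomp : pB.basis i = f (AdjoinRoot.root P ^ (i : ℕ)) + ϖ • (y * z) := by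
      rw [hbi, map_pow, (AdjoinRoot.liftAlgHom_root P (Algebra.ofId O _) L hL0 : f (AdjoinRoot.root P) = L), Algebra.smul_def]
      linear_combination hz + z * hy
    rw [hdecomp]
    exact Submodule.add_mem_sup ⟨AdjoinRoot.root P ^ (i : ℕ), rfl⟩
      (Submodule.smul_mem_smul (Ideal.mem_span_singleton_self ϖ) trivial)
  have hsurj : Function.Surjective f := by
    intro yb
    obtain ⟨xa, hxa⟩ := htop (Submodule.mem_top : yb ∈ ⊤)
    exact ⟨xa, hxa⟩
  let pA : PowerBasis O (AdjoinRoot P) := AdjoinRoot.powerBasis' hP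
  let g : AdjoinRoot P ≃ₗ[O] AdjoinRoot Q := pA.basis.equiv pB.basis (finCongr (by
    show (AdjoinRoot.powerBasis' hP).dim = (AdjoinRoot.powerBasis' hQ).dim
    rw [AdjoinRoot.powerBasis'_dim, AdjoinRoot.powerBasis'_dim, hn, hQn]))
  have hinjf : Function.Injective f :=
    OrzechProperty.injective_of_surjective_of_injective g.toLinearMap f.toLinearMap
      g.injective hsurj
  exact ⟨AlgEquiv.ofBijective f ⟨hinjf, hsurj⟩⟩
end

section
/- Let s ≥ 1 and let L : ℤ^s → ℤ^s be the group homomorphism defined by L(d)_0 = −d_{s−1} − d_0 and L(d)_i = d_{i−1} − d_i for 1 ≤ i ≤ s−1 (indices 0,…,s−1). Then the image of L is exactly the set of vectors e ∈ ℤ^s whose coordinate sum Σ_{i} e_i is even; consequently the map e ↦ Σ_i e_i mod 2 induces an isomorphism from the cokernel of L onto ℤ/2ℤ. -/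
/-- Lang-isogeny computation in Proposition 4.6.2: for the homomorphism
`L : ℤ^s → ℤ^s`, `L(d)_0 = −d_{s−1} − d_0`, `L(d)_i = d_{i−1} − d_i` (`i ≥ 1`),
the range of `L` consists exactly of the vectors with even coordinate sum, and the
coordinate sum mod 2 induces an isomorphism of the cokernel of `L` with `ℤ/2ℤ`. -/
theorem stmt_13 (s : ℕ) (hs : 0 < s) (L : (Fin s → ℤ) →+ (Fin s → ℤ))
    (hL : ∀ (d : Fin s → ℤ) (i : Fin s),
      L d i = if (i : ℕ) = 0 then -d ⟨s - 1, Nat.sub_lt hs Nat.one_pos⟩ - d i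
        else d ⟨(i : ℕ) - 1, lt_of_le_of_lt (Nat.sub_le _ _) i.isLt⟩ - d i) :
    (∀ e : Fin s → ℤ, e ∈ L.range ↔ 2 ∣ ∑ i, e i) ∧
      ∃ iso : ((Fin s → ℤ) ⧸ L.range) ≃+ ZMod 2,
        ∀ d : Fin s → ℤ, iso (QuotientAddGroup.mk d) = ((∑ i, d i : ℤ) : ZMod 2) := by
  -- the "previous index" map
  set ind : Fin s → Fin s := fun i =>
    if (i : ℕ) = 0 then ⟨s - 1, Nat.sub_lt hs Nat.one_pos⟩
    else ⟨(i : ℕ) - 1, lt_of_le_of_lt (Nat.sub_le _ _) i.isLt⟩ with hind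
  have hbij : Function.Bijective ind := by
    rw [← Finite.injective_iff_bijective]
    intro a b hab
    simp only [hind] at hab
    split_ifs at hab with h1 h2 h2 <;>
      · rw [Fin.ext_iff] at hab ⊢
        simp at hab
        omega
  -- key: sum of L d is even
  have hkey : ∀ d : Fin s → ℤ, 2 ∣ ∑ i, L d i := by
    intro d
    have : ((∑ i, L d i : ℤ) : ZMod 2) = 0 := by
      push_cast
      have h1 : ∀ i : Fin s, ((L d i : ℤ) : ZMod 2) = (d (ind i) : ZMod 2) + (d i : ZMod 2) := by
        intro i
        rw [hL]
        simp only [hind]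
        split_ifs with h <;> push_cast <;> ring_nf <;>
          simp [ZMod.neg_eq_self_mod_two, sub_eq_add_neg, ZMod.neg_eq_self_mod_two]
      calc ∑ i, ((L d i : ℤ) : ZMod 2)
          = ∑ i, ((d (ind i) : ZMod 2) + (d i : ZMod 2)) := by
            exact Finset.sum_congr rfl fun i _ => h1 i
        _ = (∑ i, (d (ind i) : ZMod 2)) + ∑ i, (d i : ZMod 2) := Finset.sum_add_distrib
        _ = (∑ i, (d i : ZMod 2)) + ∑ i, (d i : ZMod 2) := by
            rw [Function.Bijective.sum_comp hbij (fun i => ((d i : ℤ) : ZMod 2))]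
        _ = 0 := by
            rw [← two_mul]
            simp [ZMod.natCast_self]
            left
            decide
    rwa [ZMod.intCast_zmod_eq_zero_iff_dvd] at this
  have hrange : ∀ e : Fin s → ℤ, e ∈ L.range ↔ 2 ∣ ∑ i, e i := by
    intro e
    constructor
    · rintro ⟨d, rfl⟩; exact hkey d
    · rintro ⟨k, hk⟩
      refine ⟨fun i => k - ∑ j : Fin s, if (j : ℕ) ≤ (i : ℕ) then e j else 0, funext fun i => ?_⟩
      rw [hL]
      split_ifs with h
      · have hA : ∑ j : Fin s, (if (j : ℕ) ≤ s - 1 then e j else 0) = ∑ j, e j := by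
          refine Finset.sum_congr rfl fun j _ => ?_
          rw [if_pos (by omega)]
        have hB : ∑ j : Fin s, (if (j : ℕ) ≤ (i : ℕ) then e j else 0) = e i := by
          rw [Finset.sum_eq_single i]
          · rw [if_pos le_rfl]
          · intro j _ hj
            exact if_neg fun hc => hj (Fin.ext (by omega))
          · simp
        rw [hA, hB, hk]
        ring
      · have hi1 : (⟨(i : ℕ) - 1, lt_of_le_of_lt (Nat.sub_le _ _) i.isLt⟩ : Fin s) ≠ i :=
          fun hc => absurd (congrArg Fin.val hc) (by simp; omega)
        have : (∑ j : Fin s, if (j : ℕ) ≤ (i : ℕ) then e j else 0)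
            - (∑ j : Fin s, if (j : ℕ) ≤ (i : ℕ) - 1 then e j else 0) = e i := by
          rw [← Finset.sum_sub_distrib, Finset.sum_eq_single i]
          · rw [if_pos le_rfl, if_neg (by omega)]; ring
          · intro j _ hj
            have hj' : (j : ℕ) ≠ (i : ℕ) := fun hc => hj (Fin.ext hc)
            by_cases hji : (j : ℕ) ≤ (i : ℕ) - 1
            · rw [if_pos (by omega), if_pos hji]; ring
            · rw [if_neg (by omega), if_neg hji]; ring
          · simp
        simp only []
        linarith [this]
  refine ⟨hrange, ?_⟩
  -- sum mod 2 as a hom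
  set φ : (Fin s → ℤ) →+ ZMod 2 :=
    { toFun := fun d => ((∑ i, d i : ℤ) : ZMod 2)
      map_zero' := by simp
      map_add' := by
        intro a b
        simp only [Pi.add_apply]
        push_cast
        rw [Finset.sum_add_distrib] } with hφ
  have hker : L.range ≤ φ.ker := by
    rintro x hx
    rw [AddMonoidHom.mem_ker, hφ]
    simp only [AddMonoidHom.coe_mk, ZeroHom.coe_mk]
    rw [ZMod.intCast_zmod_eq_zero_iff_dvd]
    exact (hrange x).mp hx
  set ψ := QuotientAddGroup.lift L.range φ hker with hψ
  have hsurj : Function.Surjective ψ := by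
    intro z
    refine ⟨QuotientAddGroup.mk (Pi.single ⟨0, hs⟩ (z.val : ℤ)), ?_⟩
    rw [hψ]
    rw [QuotientAddGroup.lift_mk]
    simp only [hφ, AddMonoidHom.coe_mk, ZeroHom.coe_mk]
    rw [show (∑ i : Fin s, Pi.single (⟨0, hs⟩ : Fin s) ((z.val : ℕ) : ℤ) i)
        = ((z.val : ℕ) : ℤ) from by simp [Pi.single_apply]]
    rw [Int.cast_natCast]
    exact ZMod.natCast_rightInverse z
  have hinj : Function.Injective ψ := by
    rw [injective_iff_map_eq_zero]
    intro x hx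
    induction x using QuotientAddGroup.induction_on with
    | H d =>
      rw [hψ, QuotientAddGroup.lift_mk] at hx
      simp only [hφ, AddMonoidHom.coe_mk, ZeroHom.coe_mk] at hx
      rw [ZMod.intCast_zmod_eq_zero_iff_dvd] at hx
      rw [QuotientAddGroup.eq_zero_iff]
      exact (hrange d).mpr hx
  refine ⟨AddEquiv.ofBijective ψ ⟨hinj, hsurj⟩, fun d => ?_⟩
  show ψ (QuotientAddGroup.mk d) = _
  rw [hψ, QuotientAddGroup.lift_mk]
  rfl
end
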